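/- arXiv:2101.02307 — 4 statements merged into one kernel-verified Lean document; each statement's English description precedes it below -/
import Mathlib

section
/- Let Ω = Π_r P Π_c' where Π_r ∈ ℝ^{n_r×K}, Π_c ∈ ℝ^{n_c×K} are membership matrices (rows are PMFs), P ∈ ℝ^{K×K} has rank K, and each row/column community has at least one pure node. Let Ω = UΛV' be the compact SVD with U ∈ ℝ^{n_r×K}. Let I_r be an index set of K pure row nodes, one per community, with Π_r(I_r,:) = I_K. Then U = Π_r U(I_r,:), i.e., every row of U is the corresponding convex combination of the K rows of B_r := U(I_r,:). -/
/-!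
Multiplying `Ω = U Λ Vᵀ` on the right by `V Λ⁻¹` gives `U = Ω V Λ⁻¹ = Π_r B`,
with `B := P Π_cᵀ V Λ⁻¹`.
Restricting to the pure rows `I_r`, where `Π_r` is the identity, identifies `B` with `U(I_r,:)`.
-/

open Matrix Finset

namespace Matrix

variable {m n k : Type*} [Fintype k] {R : Type*}

theorem eq_mul_mul_inv_of_eq_mul_mul_transpose [DecidableEq k] [CommRing R] [Fintype n]
    {X : Matrix m n R} {U : Matrix m k R} {L : Matrix k k R} {V : Matrix n k R}
    (hX : X = U * L * Vᵀ) (hV : Vᵀ * V = 1) (hL : IsUnit L) : U = X * V * L⁻¹ := by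
  rw [hX, Matrix.mul_assoc U L, Matrix.mul_assoc U, Matrix.mul_assoc L, hV, Matrix.mul_one,
    Matrix.mul_assoc, Matrix.mul_nonsing_inv L ((isUnit_iff_isUnit_det L).mp hL), Matrix.mul_one]

theorem submatrix_mul_of_submatrix_eq_one [DecidableEq k] [NonAssocSemiring R]
    {A : Matrix m k R} {B : Matrix k n R} {r : k → m} (hA : A.submatrix r id = 1) :
    (A * B).submatrix r id = B := by
  rw [submatrix_mul A B r id id Function.bijective_id, hA, submatrix_id_id, Matrix.one_mul]

theorem eq_mul_submatrix_of_eq_mul [DecidableEq k] [NonAssocSemiring R]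
    {U : Matrix m n R} {A : Matrix m k R} {B : Matrix k n R} {r : k → m} (hU : U = A * B)
    (hA : A.submatrix r id = 1) : U = A * U.submatrix r id := by
  conv_rhs => rw [hU, submatrix_mul_of_submatrix_eq_one hA]
  exact hU

end Matrix

theorem row_ideal_simplex_general {nr nc K : ℕ}
    (Pr : Matrix (Fin nr) (Fin K) ℝ) (Pc : Matrix (Fin nc) (Fin K) ℝ)
    (P : Matrix (Fin K) (Fin K) ℝ)
    (U : Matrix (Fin nr) (Fin K) ℝ) (L : Matrix (Fin K) (Fin K) ℝ)
    (V : Matrix (Fin nc) (Fin K) ℝ)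
    (hSVD : Pr * P * Pcᵀ = U * L * Vᵀ)
    (hV : Vᵀ * V = 1)
    (hL : IsUnit L)
    (Ir : Fin K → Fin nr) (hIr : Pr.submatrix Ir id = 1) :
    U = Pr * U.submatrix Ir id := by
  have hU : U = Pr * (P * Pcᵀ * V * L⁻¹) := by
    rw [eq_mul_mul_inv_of_eq_mul_mul_transpose hSVD hV hL]
    simp only [Matrix.mul_assoc]
  exact eq_mul_submatrix_of_eq_mul hU hIr

/-- Row Ideal Simplex. Under DiMMSB, with Ω = Π_r P Π_c' and compact SVD
Ω = U Λ V', and I_r indexing one pure row node per community with Π_r(I_r,:) = I_K,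
we have U = Π_r U(I_r,:). -/
theorem row_ideal_simplex {nr nc K : ℕ}
    (Pr : Matrix (Fin nr) (Fin K) ℝ) (Pc : Matrix (Fin nc) (Fin K) ℝ)
    (P : Matrix (Fin K) (Fin K) ℝ)
    (hPrn : ∀ i k, 0 ≤ Pr i k) (hPrs : ∀ i, ∑ k, Pr i k = 1)
    (hPcn : ∀ j k, 0 ≤ Pc j k) (hPcs : ∀ j, ∑ k, Pc j k = 1)
    (hP : IsUnit P)
    (hpureCol : ∀ k, ∃ j, Pc j k = 1)
    (U : Matrix (Fin nr) (Fin K) ℝ) (L : Matrix (Fin K) (Fin K) ℝ)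
    (V : Matrix (Fin nc) (Fin K) ℝ)
    (hSVD : Pr * P * Pcᵀ = U * L * Vᵀ)
    (hU : Uᵀ * U = 1) (hV : Vᵀ * V = 1)
    (hLdiag : ∀ i j, i ≠ j → L i j = 0) (hL : IsUnit L)
    (Ir : Fin K → Fin nr) (hIr : Pr.submatrix Ir id = 1) :
    U = Pr * U.submatrix Ir id :=
  row_ideal_simplex_general Pr Pc P U L V hSVD hV hL Ir hIr
end

section
/- Under the same setup, with V the matrix of right singular vectors of Ω = Π_r P Π_c', and I_c an index set of K pure column nodes with Π_c(I_c,:) = I_K, we have V = Π_c V(I_c,:). -/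
/-! Since `UᵀU = I` and `Λ` is invertible, the decomposition can be solved for `V`:
`V = Ωᵀ U Λ⁻ᵀ = Π_c B` with `B = Pᵀ Π_rᵀ U Λ⁻ᵀ`. Restricting to the pure column nodes, where
`Π_c` is the identity, gives `V(I_c,:) = B`. -/

open Matrix

namespace Matrix

variable {R m n k : Type*} [CommRing R]

theorem eq_transpose_mul_mul_inv_transpose_of_eq_mul_mul_transpose [Fintype m] [Fintype k]
    [DecidableEq k] {Ω : Matrix m n R} {U : Matrix m k R} {L : Matrix k k R}
    {V : Matrix n k R} (hΩ : Ω = U * L * Vᵀ) (hU : Uᵀ * U = 1) (hL : IsUnit L) :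
    V = Ωᵀ * U * L⁻¹ᵀ := by
  have hLdet : IsUnit L.det := (isUnit_iff_isUnit_det L).mp hL
  have hVt : Vᵀ = L⁻¹ * Uᵀ * Ω := by
    rw [hΩ, Matrix.mul_assoc, ← Matrix.mul_assoc Uᵀ, ← Matrix.mul_assoc Uᵀ, hU,
      Matrix.one_mul, ← Matrix.mul_assoc, nonsing_inv_mul L hLdet, Matrix.one_mul]
  simpa [transpose_mul, Matrix.mul_assoc] using congrArg transpose hVt

theorem submatrix_mul_of_submatrix_eq_one_s2 [Fintype k] [DecidableEq k] {l : Type*}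
    {W : Matrix n k R} (B : Matrix k l R) {I : k → n} (hI : W.submatrix I id = 1) :
    (W * B).submatrix I id = B := by
  rw [submatrix_mul W B I id id Function.bijective_id, hI, submatrix_id_id, Matrix.one_mul]

theorem eq_mul_submatrix_of_eq_mul_s2 [Fintype k] [DecidableEq k] {l : Type*}
    {V : Matrix n l R} {W : Matrix n k R} {B : Matrix k l R} (hV : V = W * B) {I : k → n}
    (hI : W.submatrix I id = 1) :
    V = W * V.submatrix I id := by
  rw [hV, submatrix_mul_of_submatrix_eq_one_s2 B hI]

end Matrix

theorem column_ideal_simplex_general {nr nc K : ℕ}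
    (Pr : Matrix (Fin nr) (Fin K) ℝ) (Pc : Matrix (Fin nc) (Fin K) ℝ)
    (P : Matrix (Fin K) (Fin K) ℝ)
    (U : Matrix (Fin nr) (Fin K) ℝ) (L : Matrix (Fin K) (Fin K) ℝ)
    (V : Matrix (Fin nc) (Fin K) ℝ)
    (hSVD : Pr * P * Pcᵀ = U * L * Vᵀ)
    (hU : Uᵀ * U = 1)
    (hL : IsUnit L)
    (Ic : Fin K → Fin nc) (hIc : Pc.submatrix Ic id = 1) :
    V = Pc * V.submatrix Ic id := by
  have hV : V = Pc * ((Pr * P)ᵀ * U * L⁻¹ᵀ) := by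
    rw [eq_transpose_mul_mul_inv_transpose_of_eq_mul_mul_transpose hSVD hU hL,
      transpose_mul, transpose_transpose, Matrix.mul_assoc, Matrix.mul_assoc, Matrix.mul_assoc]
  exact eq_mul_submatrix_of_eq_mul_s2 hV hIc

/-- Column Ideal Simplex. Under the same setup, with V the right singular
matrix of Ω = Π_r P Π_c' and I_c indexing pure column nodes with Π_c(I_c,:) = I_K,
we have V = Π_c V(I_c,:). -/
theorem column_ideal_simplex {nr nc K : ℕ}
    (Pr : Matrix (Fin nr) (Fin K) ℝ) (Pc : Matrix (Fin nc) (Fin K) ℝ)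
    (P : Matrix (Fin K) (Fin K) ℝ)
    (hPrn : ∀ i k, 0 ≤ Pr i k) (hPrs : ∀ i, ∑ k, Pr i k = 1)
    (hPcn : ∀ j k, 0 ≤ Pc j k) (hPcs : ∀ j, ∑ k, Pc j k = 1)
    (hP : IsUnit P)
    (hpureRow : ∀ k, ∃ i, Pr i k = 1)
    (U : Matrix (Fin nr) (Fin K) ℝ) (L : Matrix (Fin K) (Fin K) ℝ)
    (V : Matrix (Fin nc) (Fin K) ℝ)
    (hSVD : Pr * P * Pcᵀ = U * L * Vᵀ)
    (hU : Uᵀ * U = 1) (hV : Vᵀ * V = 1)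
    (hLdiag : ∀ i j, i ≠ j → L i j = 0) (hL : IsUnit L)
    (Ic : Fin K → Fin nc) (hIc : Pc.submatrix Ic id = 1) :
    V = Pc * V.submatrix Ic id :=
  column_ideal_simplex_general Pr Pc P U L V hSVD hU hL Ic hIc
end

section
/- Suppose U ∈ ℝ^{n_r×K} has orthonormal columns and U = Π_r B_r where Π_r is a membership matrix (rows are PMFs) and B_r ∈ ℝ^{K×K} is invertible. Then for every row i, √(1/(K·λ_1(Π_r'Π_r))) ≤ ‖U(i,:)‖_2 ≤ √(1/λ_K(Π_r'Π_r)). -/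
/-!
From `Uᵀ U = 1` and `U = Π B` we get `Bᵀ (ΠᵀΠ) B = 1`, hence `(ΠᵀΠ)⁻¹ = B Bᵀ` and
`‖U(i,:)‖² = πᵢᵀ (ΠᵀΠ)⁻¹ πᵢ`, where `πᵢ` is the `i`-th row of `Π`. In an orthonormal eigenbasis of
`ΠᵀΠ` this quadratic form lies between `‖πᵢ‖² / λ₁` and `‖πᵢ‖² / λ_K`, and a probability vector
`πᵢ ∈ ℝᴷ` has `1 / K ≤ ‖πᵢ‖² ≤ 1`.
-/

open Matrix Finset

namespace Matrix

variable {n : Type*} [Fintype n]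

theorem dotProduct_mul_transpose_mulVec {m R : Type*} [Fintype m] [CommRing R]
    (B : Matrix n m R) (x : n → R) : x ⬝ᵥ ((B * Bᵀ) *ᵥ x) = (x ᵥ* B) ⬝ᵥ (x ᵥ* B) := by
  rw [← mulVec_mulVec, dotProduct_mulVec, mulVec_transpose]

variable [DecidableEq n]

theorem dotProduct_mul_diagonal_mul_transpose_mulVec {R : Type*} [CommRing R]
    (V : Matrix n n R) (d : n → R) (x : n → R) :
    x ⬝ᵥ ((V * diagonal d * Vᵀ) *ᵥ x) = ∑ j, d j * (Vᵀ *ᵥ x) j ^ 2 := by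
  rw [← mulVec_mulVec, ← mulVec_mulVec, dotProduct_mulVec, ← mulVec_transpose]
  simp only [dotProduct, mulVec_diagonal, sq]
  exact sum_congr rfl fun j _ => by ring

theorem IsHermitian.sum_sq_eigenvectorUnitary_transpose_mulVec {M : Matrix n n ℝ}
    (hM : M.IsHermitian) (x : n → ℝ) :
    ∑ j, ((hM.eigenvectorUnitary : Matrix n n ℝ)ᵀ *ᵥ x) j ^ 2 = x ⬝ᵥ x := by
  have hV : (hM.eigenvectorUnitary : Matrix n n ℝ) * (hM.eigenvectorUnitary : Matrix n n ℝ)ᵀ = 1 :=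
    mem_unitaryGroup_iff.mp hM.eigenvectorUnitary.2
  simpa [hV] using (dotProduct_mul_diagonal_mul_transpose_mulVec
    (hM.eigenvectorUnitary : Matrix n n ℝ) 1 x).symm

theorem inv_eq_mul_of_mul_mul_eq_one {R : Type*} [CommRing R] {C M B : Matrix n n R}
    (h : C * M * B = 1) : M⁻¹ = B * C := by
  rw [Matrix.mul_assoc, mul_eq_one_comm, Matrix.mul_assoc] at h
  exact inv_eq_right_inv h

theorem PosDef.inv_eq_eigenvectorUnitary_mul_diagonal_mul_transpose {M : Matrix n n ℝ}
    (hM : M.PosDef) :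
    M⁻¹ = (hM.1.eigenvectorUnitary : Matrix n n ℝ) * diagonal (fun j => (hM.1.eigenvalues j)⁻¹) *
      (hM.1.eigenvectorUnitary : Matrix n n ℝ)ᵀ := by
  set V := (hM.1.eigenvectorUnitary : Matrix n n ℝ)
  set Λ := diagonal hM.1.eigenvalues
  set Λinv := diagonal fun j => (hM.1.eigenvalues j)⁻¹
  have hVV : V * Vᵀ = 1 := mem_unitaryGroup_iff.mp hM.1.eigenvectorUnitary.2
  have hVV' : Vᵀ * V = 1 := mem_unitaryGroup_iff'.mp hM.1.eigenvectorUnitary.2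
  have hspec : M = V * Λ * Vᵀ := by
    conv_lhs => rw [hM.1.spectral_theorem]
    rfl
  have hΛ : Λ * Λinv = 1 := by
    rw [diagonal_mul_diagonal, ← diagonal_one]
    exact congrArg diagonal (funext fun j => mul_inv_cancel₀ (hM.eigenvalues_pos j).ne')
  apply inv_eq_right_inv
  calc M * (V * Λinv * Vᵀ) = V * (Λ * (Vᵀ * V) * Λinv) * Vᵀ := by rw [hspec]; noncomm_ring
    _ = 1 := by rw [hVV', mul_one, hΛ, mul_one, hVV]

theorem PosDef.dotProduct_inv_mulVec_eq_sum {M : Matrix n n ℝ} (hM : M.PosDef) (x : n → ℝ) :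
    x ⬝ᵥ (M⁻¹ *ᵥ x) =
      ∑ j, (hM.1.eigenvalues j)⁻¹ * ((hM.1.eigenvectorUnitary : Matrix n n ℝ)ᵀ *ᵥ x) j ^ 2 := by
  rw [hM.inv_eq_eigenvectorUnitary_mul_diagonal_mul_transpose,
    dotProduct_mul_diagonal_mul_transpose_mulVec]

theorem PosDef.iSup_eigenvalues_inv_mul_le {M : Matrix n n ℝ} (hM : M.PosDef) (x : n → ℝ) :
    (⨆ j, hM.1.eigenvalues j)⁻¹ * (x ⬝ᵥ x) ≤ x ⬝ᵥ (M⁻¹ *ᵥ x) := by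
  rw [hM.dotProduct_inv_mulVec_eq_sum, ← hM.1.sum_sq_eigenvectorUnitary_transpose_mulVec, mul_sum]
  refine sum_le_sum fun j _ => mul_le_mul_of_nonneg_right ?_ (sq_nonneg _)
  exact inv_anti₀ (hM.eigenvalues_pos j) (le_ciSup (Set.finite_range _).bddAbove j)

theorem PosDef.dotProduct_inv_mulVec_le {M : Matrix n n ℝ} (hM : M.PosDef) (x : n → ℝ) :
    x ⬝ᵥ (M⁻¹ *ᵥ x) ≤ (⨅ j, hM.1.eigenvalues j)⁻¹ * (x ⬝ᵥ x) := by
  rw [hM.dotProduct_inv_mulVec_eq_sum, ← hM.1.sum_sq_eigenvectorUnitary_transpose_mulVec, mul_sum]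
  refine sum_le_sum fun j _ => mul_le_mul_of_nonneg_right ?_ (sq_nonneg _)
  have : Nonempty n := ⟨j⟩
  obtain ⟨j₀, hj₀⟩ := exists_eq_ciInf_of_finite (f := hM.1.eigenvalues)
  rw [← hj₀]
  exact inv_anti₀ (hM.eigenvalues_pos j₀) (hj₀ ▸ ciInf_le (Set.finite_range _).bddBelow j)

end Matrix

theorem sum_sq_le_one_of_nonneg_of_sum_eq_one {ι : Type*} {s : Finset ι} {p : ι → ℝ}
    (hp : ∀ i ∈ s, 0 ≤ p i) (hs : ∑ i ∈ s, p i = 1) : ∑ i ∈ s, p i ^ 2 ≤ 1 := by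
  simpa [hs] using sum_sq_le_sq_sum_of_nonneg hp

theorem inv_card_le_sum_sq_of_sum_eq_one {ι : Type*} {s : Finset ι} {p : ι → ℝ}
    (hs : ∑ i ∈ s, p i = 1) : (#s : ℝ)⁻¹ ≤ ∑ i ∈ s, p i ^ 2 := by
  have hcard : (0 : ℝ) < #s := by
    exact_mod_cast card_pos.2 (nonempty_of_sum_ne_zero (hs ▸ one_ne_zero))
  have hcs := sq_sum_le_card_mul_sum_sq (s := s) (f := p)
  rw [hs, one_pow] at hcs
  exact (inv_le_iff_one_le_mul₀' hcard).2 hcs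

theorem row_norm_bounds_general {nr K : ℕ}
    (U Pr : Matrix (Fin nr) (Fin K) ℝ) (Br : Matrix (Fin K) (Fin K) ℝ)
    (hUU : Uᵀ * U = 1) (hU : U = Pr * Br)
    (hnn : ∀ i k, 0 ≤ Pr i k) (hsum : ∀ i, ∑ k, Pr i k = 1)
    (hPP : (Prᵀ * Pr).IsHermitian) (hPD : (Prᵀ * Pr).PosDef) :
    ∀ i : Fin nr,
      Real.sqrt (1 / (K * ⨆ j, hPP.eigenvalues j)) ≤ Real.sqrt (∑ k, (U i k) ^ 2) ∧
      Real.sqrt (∑ k, (U i k) ^ 2) ≤ Real.sqrt (1 / ⨅ j, hPP.eigenvalues j) := by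
  intro i
  have hinv : (Prᵀ * Pr)⁻¹ = Br * Brᵀ := inv_eq_mul_of_mul_mul_eq_one <| by
    rw [← hUU, hU, transpose_mul]; simp only [Matrix.mul_assoc]
  have hrow : ∑ k, U i k ^ 2 = Pr i ⬝ᵥ ((Prᵀ * Pr)⁻¹ *ᵥ Pr i) := by
    rw [hinv, dotProduct_mul_transpose_mulVec, hU]
    simp only [dotProduct, sq]
    rfl
  have hnorm : Pr i ⬝ᵥ Pr i = ∑ k, Pr i k ^ 2 := by simp only [dotProduct, sq]
  constructor <;> apply Real.sqrt_le_sqrt <;> rw [hrow]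
  · calc 1 / (K * ⨆ j, hPP.eigenvalues j)
        = (⨆ j, hPP.eigenvalues j)⁻¹ * (#(univ : Finset (Fin K)) : ℝ)⁻¹ := by
          rw [card_univ, Fintype.card_fin, one_div, mul_inv, mul_comm]
      _ ≤ (⨆ j, hPP.eigenvalues j)⁻¹ * (Pr i ⬝ᵥ Pr i) :=
          mul_le_mul_of_nonneg_left (hnorm ▸ inv_card_le_sum_sq_of_sum_eq_one (hsum i))
            (inv_nonneg.2 (Real.iSup_nonneg fun j => (hPD.eigenvalues_pos j).le))
      _ ≤ Pr i ⬝ᵥ ((Prᵀ * Pr)⁻¹ *ᵥ Pr i) := hPD.iSup_eigenvalues_inv_mul_le _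
  · calc Pr i ⬝ᵥ ((Prᵀ * Pr)⁻¹ *ᵥ Pr i)
        ≤ (⨅ j, hPP.eigenvalues j)⁻¹ * (Pr i ⬝ᵥ Pr i) := hPD.dotProduct_inv_mulVec_le _
      _ ≤ (⨅ j, hPP.eigenvalues j)⁻¹ * 1 :=
          mul_le_mul_of_nonneg_left
            (hnorm ▸ sum_sq_le_one_of_nonneg_of_sum_eq_one (fun k _ => hnn i k) (hsum i))
            (inv_nonneg.2 (Real.iInf_nonneg fun j => (hPD.eigenvalues_pos j).le))
      _ = 1 / ⨅ j, hPP.eigenvalues j := by rw [mul_one, one_div]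

/-- Row norm bounds on the singular vector matrix:
√(1/(K λ₁(Π_r'Π_r))) ≤ ‖U(i,:)‖₂ ≤ √(1/λ_K(Π_r'Π_r)). -/
theorem row_norm_bounds {nr K : ℕ} (hK : 0 < K)
    (U Pr : Matrix (Fin nr) (Fin K) ℝ) (Br : Matrix (Fin K) (Fin K) ℝ)
    (hUU : Uᵀ * U = 1) (hU : U = Pr * Br) (hBr : IsUnit Br)
    (hnn : ∀ i k, 0 ≤ Pr i k) (hsum : ∀ i, ∑ k, Pr i k = 1)
    (hPP : (Prᵀ * Pr).IsHermitian) (hPD : (Prᵀ * Pr).PosDef) :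
    ∀ i : Fin nr,
      Real.sqrt (1 / (K * ⨆ j, hPP.eigenvalues j)) ≤ Real.sqrt (∑ k, (U i k) ^ 2) ∧
      Real.sqrt (∑ k, (U i k) ^ 2) ≤ Real.sqrt (1 / ⨅ j, hPP.eigenvalues j) :=
  row_norm_bounds_general U Pr Br hUU hU hnn hsum hPP hPD
end

section
/- Identifiability of DiMMSB: Suppose Ω = Π_r P Π_c' = Π̃_r P̃ Π̃_c' where rank(P) = rank(P̃) = K, Π_r, Π_c, Π̃_r, Π̃_c are membership matrices (rows are PMFs), and each of the K row communities and K column communities contains at least one pure node for both parameterizations, with the pure node index sets I_r, I_c satisfying Π_r(I_r,:) = I_K, Π_c(I_c,:) = I_K and likewise for the tilde parameters. Then there exist K×K permutation matrices M_r, M_c such that Π_r = Π̃_r M_r, Π_c = Π̃_c M_c, and P̃ = M_r' P M_c (i.e., the parameters are unique up to permutation of community labels). -/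
open Matrix Finset

/-- The K×K permutation matrix of a permutation σ. -/
def permMatrix {K : ℕ} (σ : Equiv.Perm (Fin K)) : Matrix (Fin K) (Fin K) ℝ :=
  Matrix.of fun i j => if σ i = j then (1 : ℝ) else 0

/-! Restricting `Ω` to the pure columns `I_c` of `Π_c` gives `Π_r P = Π̃_r P̃ Π̃_c(I_c,:)'`, and
restricting further to the pure rows `J_r` of `Π̃_r` gives `Π_r(J_r,:) P = P̃ Π̃_c(I_c,:)'`.
Cancelling `P` yields `Π_r = Π̃_r Π_r(J_r,:)`, and symmetrically `Π̃_r = Π_r Π̃_r(I_r,:)`.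
Evaluating at the rows `I_r` shows that the nonnegative matrices `Π_r(J_r,:)` and `Π̃_r(I_r,:)`
are mutually inverse, and a nonnegative matrix with a nonnegative row-stochastic inverse is a
permutation matrix. Columns are handled by transposing `Ω`. -/

namespace Matrix

variable {l m n o k R : Type*}

section Stochastic

variable [Fintype n] [DecidableEq n] [CommRing R] [LinearOrder R] [IsStrictOrderedRing R]
  {B D : Matrix n n R}

theorem row_eq_one_row_of_mul_eq_one (hB : ∀ i j, 0 ≤ B i j) (hD : ∀ i j, 0 ≤ D i j)
    (hDs : ∀ i, ∑ j, D i j = 1) (hBD : B * D = 1) {i k : n} (hik : 0 < B i k) :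
    B i = (1 : Matrix n n R) k := by
  have hDk : D k = Pi.single i 1 := by
    have hzero : ∀ j ≠ i, D k j = 0 := fun j hj => by
      have hsum : ∑ l, B i l * D l j = 0 := by rw [← mul_apply, hBD, one_apply_ne hj.symm]
      have hterm := (sum_eq_zero_iff_of_nonneg fun l _ => mul_nonneg (hB i l) (hD l j)).mp
        hsum k (mem_univ k)
      exact (mul_eq_zero.mp hterm).resolve_left hik.ne'
    have hone : D k i = 1 := by
      rw [← hDs k, sum_eq_single i (fun j _ hj => hzero j hj) (by simp)]
    ext j
    by_cases hj : j = i
    · subst hj; simpa using hone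
    · simpa [hj] using hzero j hj
  calc B i = Pi.single i 1 ᵥ* B := (single_one_vecMul i B).symm
    _ = (D * B) k := by rw [← hDk]; rfl
    _ = (1 : Matrix n n R) k := by rw [mul_eq_one_comm.mp hBD]

theorem exists_eq_permMatrix_of_mul_eq_one (hB : ∀ i j, 0 ≤ B i j) (hD : ∀ i j, 0 ≤ D i j)
    (hDs : ∀ i, ∑ j, D i j = 1) (hBD : B * D = 1) :
    ∃ σ : Equiv.Perm n, B = σ.permMatrix R := by
  have hpos : ∀ i, ∃ k, 0 < B i k := fun i => by
    by_contra! h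
    have hrow : B i = 0 := funext fun k => le_antisymm (h k) (hB i k)
    have hii : (B * D) i i = 1 := by rw [hBD, one_apply_eq]
    simp [mul_apply, hrow] at hii
  choose f hf using hpos
  have hrow i : B i = (1 : Matrix n n R) (f i) :=
    row_eq_one_row_of_mul_eq_one hB hD hDs hBD (hf i)
  have hinj : Function.Injective f := fun i i' h => by
    have hBi : B i = B i' := by rw [hrow, hrow, h]
    have hii : (1 : Matrix n n R) i i = (1 : Matrix n n R) i' i := by
      rw [← hBD, mul_apply, mul_apply, hBi]
    by_contra hne
    simp [one_apply_ne (Ne.symm hne)] at hii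
  refine ⟨Equiv.ofBijective f hinj.bijective_of_finite, ?_⟩
  ext i j
  simp [hrow, one_apply, PEquiv.toMatrix_apply]

end Stochastic

section Factorization

variable [Fintype k]

theorem submatrix_mul_mul_transpose [NonUnitalSemiring R] (X : Matrix m k R) (P : Matrix k k R)
    (Y : Matrix o k R) (f : l → m) (g : n → o) :
    (X * P * Yᵀ).submatrix f g = X.submatrix f id * P * (Y.submatrix g id)ᵀ := by
  ext i j
  simp [mul_apply, sum_mul]

theorem transpose_mul_mul_transpose [CommSemiring R] (X : Matrix m k R) (P : Matrix k k R)
    (Y : Matrix o k R) : (X * P * Yᵀ)ᵀ = Y * Pᵀ * Xᵀ := by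
  rw [transpose_mul, transpose_mul, transpose_transpose, Matrix.mul_assoc]

variable [DecidableEq k] [CommRing R]

theorem eq_one_of_mul_eq_self {X : Matrix m k R} {I : k → m} (hI : X.submatrix I id = 1)
    {M : Matrix k k R} (hXM : X * M = X) : M = 1 :=
  calc M = X.submatrix I id * M := by rw [hI, Matrix.one_mul]
    _ = (X * M).submatrix I id := by
      rw [submatrix_mul _ _ _ _ _ Function.bijective_id, submatrix_id_id]
    _ = 1 := by rw [hXM, hI]

variable {Pr Qr : Matrix m k R} {Pc Qc : Matrix o k R} {P Q : Matrix k k R}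

theorem eq_mul_submatrix_of_mul_mul_transpose_eq (hP : IsUnit P) {Ic : k → o}
    (hIc : Pc.submatrix Ic id = 1) {Jr : k → m} (hJr : Qr.submatrix Jr id = 1)
    (h : Pr * P * Pcᵀ = Qr * Q * Qcᵀ) : Pr = Qr * Pr.submatrix Jr id := by
  have hcols := congrArg (·.submatrix id Ic) h
  have hpure := congrArg (·.submatrix Jr Ic) h
  simp only [submatrix_mul_mul_transpose, submatrix_id_id, hIc, hJr, transpose_one,
    Matrix.mul_one, Matrix.one_mul] at hcols hpure
  obtain ⟨_⟩ := hP.nonempty_invertible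
  rw [← mul_left_inj_of_invertible P, hcols, Matrix.mul_assoc Qr, ← hpure, Matrix.mul_assoc]

end Factorization

end Matrix

theorem permMatrix_eq_perm_permMatrix {K : ℕ} (σ : Equiv.Perm (Fin K)) :
    permMatrix σ = σ.permMatrix ℝ := by
  ext i j
  simp [permMatrix, PEquiv.toMatrix_apply]

theorem dimmsb_identifiability_general {nr nc K : ℕ}
    (Pr Qr : Matrix (Fin nr) (Fin K) ℝ) (Pc Qc : Matrix (Fin nc) (Fin K) ℝ)
    (P Q : Matrix (Fin K) (Fin K) ℝ)
    (hPrn : ∀ i k, 0 ≤ Pr i k)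
    (hPcn : ∀ j k, 0 ≤ Pc j k)
    (hQrn : ∀ i k, 0 ≤ Qr i k) (hQrs : ∀ i, ∑ k, Qr i k = 1)
    (hQcn : ∀ j k, 0 ≤ Qc j k) (hQcs : ∀ j, ∑ k, Qc j k = 1)
    (hP : IsUnit P) (hQ : IsUnit Q)
    (Ir : Fin K → Fin nr) (hIr : Pr.submatrix Ir id = 1)
    (Ic : Fin K → Fin nc) (hIc : Pc.submatrix Ic id = 1)
    (Jr : Fin K → Fin nr) (hJr : Qr.submatrix Jr id = 1)
    (Jc : Fin K → Fin nc) (hJc : Qc.submatrix Jc id = 1)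
    (hOm : Pr * P * Pcᵀ = Qr * Q * Qcᵀ) :
    ∃ σr σc : Equiv.Perm (Fin K),
      Pr = Qr * permMatrix σr ∧ Pc = Qc * permMatrix σc ∧
      Q = permMatrix σr * P * (permMatrix σc)ᵀ := by
  have hOmt : Pc * Pᵀ * Prᵀ = Qc * Qᵀ * Qrᵀ := by
    rw [← transpose_mul_mul_transpose, hOm, transpose_mul_mul_transpose]
  have hPrQr := eq_mul_submatrix_of_mul_mul_transpose_eq hP hIc hJr hOm
  have hQrPr := eq_mul_submatrix_of_mul_mul_transpose_eq hQ hJc hIr hOm.symm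
  have hPcQc :=
    eq_mul_submatrix_of_mul_mul_transpose_eq ((isUnit_transpose P).2 hP) hIr hJc hOmt
  have hQcPc :=
    eq_mul_submatrix_of_mul_mul_transpose_eq ((isUnit_transpose Q).2 hQ) hJr hIc hOmt.symm
  have hr : Pr.submatrix Jr id * Qr.submatrix Ir id = 1 := mul_eq_one_comm.mp <|
    eq_one_of_mul_eq_self hIr (by rw [← Matrix.mul_assoc, ← hQrPr, ← hPrQr])
  have hc : Pc.submatrix Jc id * Qc.submatrix Ic id = 1 := mul_eq_one_comm.mp <|
    eq_one_of_mul_eq_self hIc (by rw [← Matrix.mul_assoc, ← hQcPc, ← hPcQc])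
  obtain ⟨σr, hσr⟩ := exists_eq_permMatrix_of_mul_eq_one (B := Pr.submatrix Jr id)
    (fun i k => hPrn (Jr i) k) (fun i k => hQrn (Ir i) k) (fun i => hQrs (Ir i)) hr
  obtain ⟨σc, hσc⟩ := exists_eq_permMatrix_of_mul_eq_one (B := Pc.submatrix Jc id)
    (fun j k => hPcn (Jc j) k) (fun j k => hQcn (Ic j) k) (fun j => hQcs (Ic j)) hc
  have hQPr : Q = Pr.submatrix Jr id * P * (Pc.submatrix Jc id)ᵀ := by
    simpa [submatrix_mul_mul_transpose, hJr, hJc] using (congrArg (·.submatrix Jr Jc) hOm).symm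
  refine ⟨σr, σc, ?_, ?_, ?_⟩ <;> simp only [permMatrix_eq_perm_permMatrix]
  · rw [← hσr, ← hPrQr]
  · rw [← hσc, ← hPcQc]
  · rw [← hσr, ← hσc, ← hQPr]

/-- Identifiability of DiMMSB. If Π_r P Π_c' = Π̃_r P̃ Π̃_c' for two sets of
parameters, each with invertible K×K mixing matrix, membership matrices whose rows are
PMFs, and pure nodes in every row and column community, then the parameters agree up to
permutation of community labels. -/
theorem dimmsb_identifiability {nr nc K : ℕ}
    (Pr Qr : Matrix (Fin nr) (Fin K) ℝ) (Pc Qc : Matrix (Fin nc) (Fin K) ℝ)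
    (P Q : Matrix (Fin K) (Fin K) ℝ)
    (hPrn : ∀ i k, 0 ≤ Pr i k) (hPrs : ∀ i, ∑ k, Pr i k = 1)
    (hPcn : ∀ j k, 0 ≤ Pc j k) (hPcs : ∀ j, ∑ k, Pc j k = 1)
    (hQrn : ∀ i k, 0 ≤ Qr i k) (hQrs : ∀ i, ∑ k, Qr i k = 1)
    (hQcn : ∀ j k, 0 ≤ Qc j k) (hQcs : ∀ j, ∑ k, Qc j k = 1)
    (hP : IsUnit P) (hQ : IsUnit Q)
    (Ir : Fin K → Fin nr) (hIr : Pr.submatrix Ir id = 1)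
    (Ic : Fin K → Fin nc) (hIc : Pc.submatrix Ic id = 1)
    (Jr : Fin K → Fin nr) (hJr : Qr.submatrix Jr id = 1)
    (Jc : Fin K → Fin nc) (hJc : Qc.submatrix Jc id = 1)
    (hOm : Pr * P * Pcᵀ = Qr * Q * Qcᵀ) :
    ∃ σr σc : Equiv.Perm (Fin K),
      Pr = Qr * permMatrix σr ∧ Pc = Qc * permMatrix σc ∧
      Q = permMatrix σr * P * (permMatrix σc)ᵀ :=
  dimmsb_identifiability_general Pr Qr Pc Qc P Q hPrn hPcn hQrn hQrs hQcn hQcs hP hQ Ir hIr Ic hIc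
    Jr hJr Jc hJc hOm
end
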